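/- arXiv:2001.10921 — 2 statements merged into one kernel-verified Lean document; each statement's English description precedes it below -/
import Mathlib

section
/- Let n, p, q, m be natural numbers. Let φ : ℝ^n → ℝ^q, ψ : ℝ^n → ℝ^p, δ : ℝ^n → ℝ^m be differentiable near α₀ ∈ ℝ^n, let F : ℝ^p × ℝ^q → ℝ^p and B : ℝ^m × ℝ^p × ℝ^q × ℝ^n → ℝ^m be continuously differentiable with F(ψ(α), φ(α)) = 0 and B(δ(α), ψ(α), φ(α), α) = 0 for all α near α₀, and let J : ℝ^m × ℝ^p × ℝ^q × ℝ^n → ℝ be differentiable. Write P₀ = (δ(α₀), ψ(α₀), φ(α₀), α₀), and assume the partial Jacobians M = [∂F/∂c_I](ψ(α₀), φ(α₀)) ∈ ℝ^{p×p} and K = [∂B/∂d](P₀) ∈ ℝ^{m×m} are invertible. Define the vectors a = K^{-T} ∇_d J(P₀), b_I = −[∂B/∂c_I](P₀)^T a + ∇_{c_I} J(P₀), b_B = −[∂B/∂c_B](P₀)^T a + ∇_{c_B} J(P₀), e = M^{-T} b_I, and q = −[∂F/∂c_B](ψ(α₀), φ(α₀))^T e + b_B. Then the gradient of the reduced objective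 j(α) = J(δ(α), ψ(α), φ(α), α) at α₀ equals ∇j(α₀) = Dφ(α₀)^T q − [∂B/∂α](P₀)^T a + ∇_α J(P₀). -/
open Matrix

/-- The Jacobian matrix of a map between finite-dimensional real coordinate
spaces, identified with a matrix via the standard bases. -/
noncomputable def jac {n m : ℕ} (f : (Fin n → ℝ) → (Fin m → ℝ)) (x : Fin n → ℝ) :
    Matrix (Fin m) (Fin n) ℝ :=
  LinearMap.toMatrix' (fderiv ℝ f x).toLinearMap

/-- The gradient (transposed derivative) of a scalar function on a
finite-dimensional real coordinate space, identified with a vector via the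
standard basis. -/
noncomputable def grad {n : ℕ} (f : (Fin n → ℝ) → ℝ) (x : Fin n → ℝ) : Fin n → ℝ :=
  fun i => fderiv ℝ f x (Pi.single i 1)

/-!
Differentiating the two constraints `B = 0` and `F = 0` in a direction `v` gives linear relations
between `w_d = Dδ v`, `w_I = Dψ v`, `w_B = Dφ v` and `v`, while the chain rule writes `∇j ⬝ v` as
the sum of the partial gradients of `J` paired with these vectors. Pairing the linearized state
equation with the adjoint `a` (where `Kᵀ a = ∇_d J`) eliminates `w_d`; pairing the linearized grid
equation with `e` (where `Mᵀ e = b_I`) then eliminates `w_I`. What remains only involves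
`w_B = Dφ v` and `v`, which is the claimed formula paired with `v`.
-/

section Calculus

variable {𝕜 : Type*} [NontriviallyNormedField 𝕜]
  {E E₁ E₂ E₃ E₄ F G : Type*} [NormedAddCommGroup E] [NormedSpace 𝕜 E]
  [NormedAddCommGroup E₁] [NormedSpace 𝕜 E₁] [NormedAddCommGroup E₂] [NormedSpace 𝕜 E₂]
  [NormedAddCommGroup E₃] [NormedSpace 𝕜 E₃] [NormedAddCommGroup E₄] [NormedSpace 𝕜 E₄]
  [NormedAddCommGroup F] [NormedSpace 𝕜 F] [NormedAddCommGroup G] [NormedSpace 𝕜 G]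

theorem fderiv_comp_apply {f : F → G} {g : E → F} {g' : E →L[𝕜] F} {x : E}
    (hf : DifferentiableAt 𝕜 f (g x)) (hg : HasFDerivAt g g' x) (v : E) :
    fderiv 𝕜 (fun y => f (g y)) x v = fderiv 𝕜 f (g x) (g' v) := by
  have h : HasFDerivAt (fun y => f (g y)) ((fderiv 𝕜 f (g x)).comp g') x :=
    hf.hasFDerivAt.comp x hg
  rw [h.fderiv]
  rfl

theorem DifferentiableAt.fderiv_apply_prodMk {f : E₁ × E₂ → G} {x₁ : E₁} {x₂ : E₂}
    (hf : DifferentiableAt 𝕜 f (x₁, x₂)) (v₁ : E₁) (v₂ : E₂) :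
    fderiv 𝕜 f (x₁, x₂) (v₁, v₂) =
      fderiv 𝕜 (fun y => f (y, x₂)) x₁ v₁ + fderiv 𝕜 (fun y => f (x₁, y)) x₂ v₂ := by
  rw [fderiv_comp_apply (g := fun y => (y, x₂)) hf (hasFDerivAt_prodMk_left x₁ x₂),
    fderiv_comp_apply (g := fun y => (x₁, y)) hf (hasFDerivAt_prodMk_right x₁ x₂), ← map_add]
  simp

theorem DifferentiableAt.comp_prodMk_right {f : E₁ × E₂ → G} {x₁ : E₁} {x₂ : E₂}
    (hf : DifferentiableAt 𝕜 f (x₁, x₂)) : DifferentiableAt 𝕜 (fun y => f (x₁, y)) x₂ :=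
  hf.comp x₂ (hasFDerivAt_prodMk_right x₁ x₂).differentiableAt

theorem DifferentiableAt.fderiv_apply_prodMk₄ {f : E₁ × E₂ × E₃ × E₄ → G}
    {x₁ : E₁} {x₂ : E₂} {x₃ : E₃} {x₄ : E₄} (hf : DifferentiableAt 𝕜 f (x₁, x₂, x₃, x₄))
    (v₁ : E₁) (v₂ : E₂) (v₃ : E₃) (v₄ : E₄) :
    fderiv 𝕜 f (x₁, x₂, x₃, x₄) (v₁, v₂, v₃, v₄) =
      fderiv 𝕜 (fun y => f (y, x₂, x₃, x₄)) x₁ v₁ + fderiv 𝕜 (fun y => f (x₁, y, x₃, x₄)) x₂ v₂ +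
        fderiv 𝕜 (fun y => f (x₁, x₂, y, x₄)) x₃ v₃ +
          fderiv 𝕜 (fun y => f (x₁, x₂, x₃, y)) x₄ v₄ := by
  have hf₂ := hf.comp_prodMk_right
  have hf₃ := hf₂.comp_prodMk_right
  rw [hf.fderiv_apply_prodMk, hf₂.fderiv_apply_prodMk, hf₃.fderiv_apply_prodMk, add_assoc,
    add_assoc]

theorem fderiv_apply_eq_zero_of_comp_eventually_eq_zero {f : F → G} {g : E → F}
    {g' : E →L[𝕜] F} {x : E} (hf : DifferentiableAt 𝕜 f (g x)) (hg : HasFDerivAt g g' x)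
    (hfg : ∀ᶠ y in nhds x, f (g y) = 0) (v : E) : fderiv 𝕜 f (g x) (g' v) = 0 := by
  rw [← fderiv_comp_apply hf hg, Filter.EventuallyEq.fderiv_eq (f := fun _ => 0) hfg,
    fderiv_const_apply, _root_.zero_apply]

end Calculus

section Adjoint

variable {R : Type*} [CommRing R] {ιr ιf ιd ιI ιB ια : Type*} [Fintype ιr] [Fintype ιf]
  [Fintype ιd] [Fintype ιI] [Fintype ιB] [Fintype ια]

theorem mulVec_inv_mulVec_of_isUnit [DecidableEq ιd] {A : Matrix ιd ιd R} (hA : IsUnit A)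
    (x : ιd → R) : A *ᵥ (A⁻¹ *ᵥ x) = x := by
  rw [mulVec_mulVec, mul_nonsing_inv _ ((isUnit_iff_isUnit_det A).mp hA), one_mulVec]

theorem dotProduct_eq_of_adjoint {K : Matrix ιr ιd R} {BI : Matrix ιr ιI R}
    {BB : Matrix ιr ιB R} {Bα : Matrix ιr ια R} {M : Matrix ιf ιI R} {FB : Matrix ιf ιB R}
    {D : Matrix ιB ια R} {gd : ιd → R} {gI : ιI → R} {gB : ιB → R} {gα : ια → R}
    {a : ιr → R} {e : ιf → R} {wd : ιd → R} {wi : ιI → R} {v : ια → R}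
    (ha : Kᵀ *ᵥ a = gd) (he : Mᵀ *ᵥ e = -(BIᵀ *ᵥ a) + gI)
    (hB : K *ᵥ wd + BI *ᵥ wi + BB *ᵥ (D *ᵥ v) + Bα *ᵥ v = 0)
    (hF : M *ᵥ wi + FB *ᵥ (D *ᵥ v) = 0) :
    gd ⬝ᵥ wd + gI ⬝ᵥ wi + gB ⬝ᵥ (D *ᵥ v) + gα ⬝ᵥ v =
      (Dᵀ *ᵥ (-(FBᵀ *ᵥ e) + (-(BBᵀ *ᵥ a) + gB)) - Bαᵀ *ᵥ a + gα) ⬝ᵥ v := by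
  have hBa := congrArg (a ⬝ᵥ ·) hB
  have hFe := congrArg (e ⬝ᵥ ·) hF
  have hgI : gI = Mᵀ *ᵥ e + BIᵀ *ᵥ a := by rw [he]; abel
  subst ha hgI
  simp only [dotProduct_add, add_dotProduct, sub_dotProduct, neg_dotProduct, dotProduct_zero,
    dotProduct_mulVec, mulVec_transpose, add_vecMul, neg_vecMul] at hBa hFe ⊢
  linear_combination hBa + hFe

end Adjoint

theorem jac_mulVec {n m : ℕ} (f : (Fin n → ℝ) → (Fin m → ℝ)) (x v : Fin n → ℝ) :
    jac f x *ᵥ v = fderiv ℝ f x v := by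
  rw [jac, ← toLin'_apply, toLin'_toMatrix']
  rfl

theorem grad_dotProduct {n : ℕ} (f : (Fin n → ℝ) → ℝ) (x v : Fin n → ℝ) :
    grad f x ⬝ᵥ v = fderiv ℝ f x v := by
  conv_rhs => rw [pi_eq_sum_univ' v]
  simp [grad, dotProduct, mul_comm]

/-- Adjoint-based gradient formula (paper eqs. (25) and (27)–(29)) for the
reduced objective `j α = J (δ α, ψ α, φ α, α)`, where `δ` is defined implicitly
by the state residual `B = 0` and `ψ` by the elliptic-grid-generation residual
`F = 0`. -/
theorem stmt2 (n p q m : ℕ)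
    (φ : (Fin n → ℝ) → (Fin q → ℝ))
    (ψ : (Fin n → ℝ) → (Fin p → ℝ))
    (δ : (Fin n → ℝ) → (Fin m → ℝ))
    (α₀ : Fin n → ℝ)
    (hφ : ∀ᶠ α in nhds α₀, DifferentiableAt ℝ φ α)
    (hψ : ∀ᶠ α in nhds α₀, DifferentiableAt ℝ ψ α)
    (hδ : ∀ᶠ α in nhds α₀, DifferentiableAt ℝ δ α)
    (F : (Fin p → ℝ) × (Fin q → ℝ) → (Fin p → ℝ))
    (B : (Fin m → ℝ) × (Fin p → ℝ) × (Fin q → ℝ) × (Fin n → ℝ) → (Fin m → ℝ))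
    (hF : ContDiff ℝ 1 F)
    (hB : ContDiff ℝ 1 B)
    (hFeq : ∀ᶠ α in nhds α₀, F (ψ α, φ α) = 0)
    (hBeq : ∀ᶠ α in nhds α₀, B (δ α, ψ α, φ α, α) = 0)
    (J : (Fin m → ℝ) × (Fin p → ℝ) × (Fin q → ℝ) × (Fin n → ℝ) → ℝ)
    (hJ : Differentiable ℝ J)
    (M : Matrix (Fin p) (Fin p) ℝ)
    (hM : M = jac (fun c => F (c, φ α₀)) (ψ α₀))
    (hMinv : IsUnit M)
    (K : Matrix (Fin m) (Fin m) ℝ)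
    (hK : K = jac (fun d => B (d, ψ α₀, φ α₀, α₀)) (δ α₀))
    (hKinv : IsUnit K)
    (a : Fin m → ℝ)
    (ha : a = ((Kᵀ)⁻¹).mulVec (grad (fun d => J (d, ψ α₀, φ α₀, α₀)) (δ α₀)))
    (bI : Fin p → ℝ)
    (hbI : bI = -((jac (fun c => B (δ α₀, c, φ α₀, α₀)) (ψ α₀))ᵀ.mulVec a) +
                  grad (fun c => J (δ α₀, c, φ α₀, α₀)) (ψ α₀))
    (bB : Fin q → ℝ)
    (hbB : bB = -((jac (fun b => B (δ α₀, ψ α₀, b, α₀)) (φ α₀))ᵀ.mulVec a) +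
                  grad (fun b => J (δ α₀, ψ α₀, b, α₀)) (φ α₀))
    (e : Fin p → ℝ)
    (he : e = ((Mᵀ)⁻¹).mulVec bI)
    (qv : Fin q → ℝ)
    (hqv : qv = -((jac (fun b => F (ψ α₀, b)) (φ α₀))ᵀ.mulVec e) + bB) :
    grad (fun α => J (δ α, ψ α, φ α, α)) α₀ =
      (jac φ α₀)ᵀ.mulVec qv -
        (jac (fun β => B (δ α₀, ψ α₀, φ α₀, β)) α₀)ᵀ.mulVec a +
        grad (fun β => J (δ α₀, ψ α₀, φ α₀, β)) α₀ := by
  have hγ : HasFDerivAt (fun α => (δ α, ψ α, φ α, α))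
      ((fderiv ℝ δ α₀).prod ((fderiv ℝ ψ α₀).prod
        ((fderiv ℝ φ α₀).prod (ContinuousLinearMap.id ℝ _)))) α₀ :=
    hδ.self_of_nhds.hasFDerivAt.prodMk (hψ.self_of_nhds.hasFDerivAt.prodMk
      (hφ.self_of_nhds.hasFDerivAt.prodMk (hasFDerivAt_id α₀)))
  have hγF : HasFDerivAt (fun α => (ψ α, φ α)) ((fderiv ℝ ψ α₀).prod (fderiv ℝ φ α₀)) α₀ :=
    hψ.self_of_nhds.hasFDerivAt.prodMk hφ.self_of_nhds.hasFDerivAt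
  have hKa : Kᵀ *ᵥ a = grad (fun d => J (d, ψ α₀, φ α₀, α₀)) (δ α₀) :=
    ha ▸ mulVec_inv_mulVec_of_isUnit ((isUnit_transpose _).mpr hKinv) _
  have hMe : Mᵀ *ᵥ e = bI := he ▸ mulVec_inv_mulVec_of_isUnit ((isUnit_transpose _).mpr hMinv) _
  subst hK hM hbI hbB hqv
  have hBd := hB.differentiable one_ne_zero
  have hFd := hF.differentiable one_ne_zero
  refine dotProduct_eq _ _ fun v => ?_
  have hBlin := fderiv_apply_eq_zero_of_comp_eventually_eq_zero (hBd _) hγ hBeq v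
  have hFlin := fderiv_apply_eq_zero_of_comp_eventually_eq_zero (hFd _) hγF hFeq v
  rw [grad_dotProduct, fderiv_comp_apply (hJ _) hγ]
  simp only [ContinuousLinearMap.prod_apply, ContinuousLinearMap.id_apply] at hBlin hFlin ⊢
  rw [(hBd _).fderiv_apply_prodMk₄] at hBlin
  rw [(hFd _).fderiv_apply_prodMk] at hFlin
  rw [(hJ _).fderiv_apply_prodMk₄]
  simp only [← grad_dotProduct, ← jac_mulVec] at hBlin hFlin ⊢
  exact dotProduct_eq_of_adjoint hKa hMe hBlin hFlin
end

section
/- Let U and V be open subsets of ℝ², and let x : U → V be a bijective, twice continuously differentiable map whose Jacobian determinant is nonzero at every point of U, with inverse y : V → U (which is then twice continuously differentiable). Define the metric coefficients g₁₁ = ‖∂x/∂ξ₁‖², g₂₂ = ‖∂x/∂ξ₂‖², g₁₂ = ⟨∂x/∂ξ₁, ∂x/∂ξ₂⟩ on U. Then the following are equivalent: (i) both components x₁, x₂ of x satisfy the equations g₂₂ ∂²xᵢ/∂ξ₁² − 2 g₁₂ ∂²xᵢ/∂ξ₁∂ξ₂ + g₁₁ ∂²xᵢ/∂ξ₂² =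 0 on U for i = 1, 2; (ii) both components y₁, y₂ of the inverse are harmonic on V, i.e. ∂²y_k/∂x₁² + ∂²y_k/∂x₂² = 0 on V for k = 1, 2. -/
/-- First partial derivative `∂f/∂ξᵢ` of a scalar function on `ℝ²`. -/
noncomputable def pd (f : (Fin 2 → ℝ) → ℝ) (i : Fin 2) (ξ : Fin 2 → ℝ) : ℝ :=
  fderiv ℝ f ξ (Pi.single i 1)

/-- Second partial derivative `∂²f/∂ξᵢ∂ξⱼ` of a scalar function on `ℝ²`. -/
noncomputable def pd2 (f : (Fin 2 → ℝ) → ℝ) (i j : Fin 2) (ξ : Fin 2 → ℝ) : ℝ :=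
  pd (pd f i) j ξ

/-- Metric coefficient `g_{ij} = ⟨∂x/∂ξᵢ, ∂x/∂ξⱼ⟩` of a map `x : ℝ² → ℝ²`. -/
noncomputable def gmet (x : (Fin 2 → ℝ) → (Fin 2 → ℝ)) (i j : Fin 2)
    (ξ : Fin 2 → ℝ) : ℝ :=
  ∑ k : Fin 2, pd (fun η => x η k) i ξ * pd (fun η => x η k) j ξ

/-- A function on an open subset of `ℝ²` is harmonic if it is twice
continuously differentiable there and its Laplacian vanishes identically. -/
def Harmonic2 (u : (Fin 2 → ℝ) → ℝ) (V : Set (Fin 2 → ℝ)) : Prop :=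
  ContDiffOn ℝ 2 u V ∧ ∀ p ∈ V, pd2 u 0 0 p + pd2 u 1 1 p = 0

/-! Differentiating `y (x ξ) k = ξ k` twice gives, with `J = Dx`, `K = D(y_k) ∘ x` and
`H = D²(y_k) ∘ x`, the identities `(Jᵀ H J)_{ij} + Σₘ Kₘ ∂ᵢ∂ⱼ xₘ = 0`. Contracting them with the
adjugate of `g = JᵀJ` and using `J adj(JᵀJ) Jᵀ = det(J)² I` yields
`det(J)² Δy_k + (Dy · A(x):H(x))_k = 0`. As `det J ≠ 0` and `Dy` is invertible, the grid equations
hold exactly when both Laplacians vanish. -/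

open Filter Topology

section Calculus

variable {𝕜 : Type*} [NontriviallyNormedField 𝕜] {E F G : Type*}
  [NormedAddCommGroup E] [NormedSpace 𝕜 E] [NormedAddCommGroup F] [NormedSpace 𝕜 F]
  [NormedAddCommGroup G] [NormedSpace 𝕜 G]

theorem ContDiffAt.differentiableAt_fderiv {f : E → F} {a : E} (hf : ContDiffAt 𝕜 2 f a) :
    DifferentiableAt 𝕜 (fderiv 𝕜 f) a :=
  (hf.fderiv_right (m := 1) (by norm_num)).differentiableAt (by norm_num)

theorem fderiv_fderiv_comp {f : E → F} {g : F → G} {a : E}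
    (hf : ContDiffAt 𝕜 2 f a) (hg : ContDiffAt 𝕜 2 g (f a)) (v w : E) :
    fderiv 𝕜 (fderiv 𝕜 (g ∘ f)) a v w =
      fderiv 𝕜 (fderiv 𝕜 g) (f a) (fderiv 𝕜 f a v) (fderiv 𝕜 f a w)
        + fderiv 𝕜 g (f a) (fderiv 𝕜 (fderiv 𝕜 f) a v w) := by
  have hf₁ : ∀ᶠ z in 𝓝 a, DifferentiableAt 𝕜 f z :=
    (hf.eventually (by simp)).mono fun z hz => hz.differentiableAt (by norm_num)
  have hg₁ : ∀ᶠ z in 𝓝 a, DifferentiableAt 𝕜 g (f z) :=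
    hf.continuousAt.eventually
      ((hg.eventually (by simp)).mono fun z hz => hz.differentiableAt (by norm_num))
  have hchain : fderiv 𝕜 (g ∘ f) =ᶠ[𝓝 a] fun z => (fderiv 𝕜 g (f z)).comp (fderiv 𝕜 f z) := by
    filter_upwards [hf₁, hg₁] with z hfz hgz using fderiv_comp z hgz hfz
  have hD := HasFDerivAt.clm_comp (c := fun z => fderiv 𝕜 g (f z))
    (hg.differentiableAt_fderiv.hasFDerivAt.comp a (hf.differentiableAt (by norm_num)).hasFDerivAt)
    hf.differentiableAt_fderiv.hasFDerivAt
  rw [hchain.fderiv_eq, hD.fderiv]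
  simp [add_comm]

end Calculus

theorem ContDiffAt.to_local_left_inverse {𝕂 : Type*} [RCLike 𝕂] {E F : Type*}
    [NormedAddCommGroup E] [NormedSpace 𝕂 E] [CompleteSpace E]
    [NormedAddCommGroup F] [NormedSpace 𝕂 F] {f : E → F} {g : F → E} {f' : E ≃L[𝕂] F} {a : E}
    {n : WithTop ℕ∞} (hf : ContDiffAt 𝕂 n f a) (hf' : HasFDerivAt f (f' : E →L[𝕂] F) a)
    (hn : n ≠ 0) (hg : ∀ᶠ z in 𝓝 a, g (f z) = z) : ContDiffAt 𝕂 n g (f a) :=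
  (hf.to_localInverse hf' hn).congr_of_eventuallyEq
    ((hf.hasStrictFDerivAt' hf' hn).localInverse_unique hg)

theorem ContDiffAt.local_left_inverse_of_det_ne_zero {E : Type*} [NormedAddCommGroup E]
    [NormedSpace ℝ E] [FiniteDimensional ℝ E] {f g : E → E} {a : E} {n : WithTop ℕ∞}
    (hf : ContDiffAt ℝ n f a) (hn : n ≠ 0) (hdet : LinearMap.det (fderiv ℝ f a).toLinearMap ≠ 0)
    (hg : ∀ᶠ z in 𝓝 a, g (f z) = z) :
    ContDiffAt ℝ n g (f a) ∧ Function.Injective (fderiv ℝ g (f a)) := by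
  set e := (fderiv ℝ f a).toContinuousLinearEquivOfDetNeZero hdet
  have he : HasFDerivAt f (e : E →L[ℝ] E) a := by
    simpa [e] using (hf.differentiableAt (by simpa using hn)).hasFDerivAt
  refine ⟨hf.to_local_left_inverse he hn hg, ?_⟩
  rw [((hf.hasStrictFDerivAt' he hn).to_local_left_inverse hg).hasFDerivAt.fderiv]
  exact e.symm.injective

theorem ContinuousLinearMap.apply_eq_sum_smul_single {ι R M : Type*} [Fintype ι] [DecidableEq ι]
    [Semiring R] [TopologicalSpace R] [AddCommMonoid M] [Module R M] [TopologicalSpace M]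
    (L : (ι → R) →L[R] M) (u : ι → R) : L u = ∑ i, u i • L (Pi.single i 1) := by
  conv_lhs => rw [pi_eq_sum_univ' u]
  simp

section Plane

local notation "ℝ²" => Fin 2 → ℝ

theorem pd_apply_eq {f : ℝ² → ℝ²} {ξ : ℝ²} (hf : DifferentiableAt ℝ f ξ) (m i : Fin 2) :
    pd (fun η => f η m) i ξ = fderiv ℝ f ξ (Pi.single i 1) m := by
  rw [pd, fderiv_apply hf]; rfl

theorem fderiv_eq_sum_pd {f : ℝ² → ℝ} (ξ u : ℝ²) : fderiv ℝ f ξ u = ∑ m, pd f m ξ * u m := by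
  simp [(fderiv ℝ f ξ).apply_eq_sum_smul_single u, pd, mul_comm]

theorem pd2_eq_fderiv_fderiv {f : ℝ² → ℝ} {ξ : ℝ²} (hf : DifferentiableAt ℝ (fderiv ℝ f) ξ)
    (i j : Fin 2) : pd2 f i j ξ = fderiv ℝ (fderiv ℝ f) ξ (Pi.single j 1) (Pi.single i 1) := by
  show fderiv ℝ (fun ζ => fderiv ℝ f ζ (Pi.single i 1)) ξ (Pi.single j 1) = _
  simp [fderiv_clm_apply hf (differentiableAt_const _)]

theorem pd2_comm {f : ℝ² → ℝ} {ξ : ℝ²} (hf : ContDiffAt ℝ 2 f ξ) (i j : Fin 2) :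
    pd2 f i j ξ = pd2 f j i ξ := by
  simp only [pd2_eq_fderiv_fderiv hf.differentiableAt_fderiv,
    (hf.isSymmSndFDerivAt (by simp)).eq]

theorem pd2_apply_eq {f : ℝ² → ℝ²} {ξ : ℝ²} (hf : ContDiffAt ℝ 2 f ξ) (m i j : Fin 2) :
    pd2 (fun η => f η m) i j ξ = fderiv ℝ (fderiv ℝ f) ξ (Pi.single j 1) (Pi.single i 1) m := by
  set p : ℝ² →L[ℝ] ℝ := ContinuousLinearMap.proj m
  have hproj : ContDiffAt ℝ 2 p (f ξ) := p.contDiff.contDiffAt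
  rw [show (fun η => f η m) = p ∘ f from rfl,
    pd2_eq_fderiv_fderiv (hproj.comp ξ hf).differentiableAt_fderiv, fderiv_fderiv_comp hf hproj,
    show fderiv ℝ p = fun _ => p from funext fun _ => p.fderiv]
  simp [p]

theorem fderiv_fderiv_eq_sum_pd2 {g : ℝ² → ℝ} {ξ : ℝ²} (hg : DifferentiableAt ℝ (fderiv ℝ g) ξ)
    (u w : ℝ²) : fderiv ℝ (fderiv ℝ g) ξ u w = ∑ m, ∑ n, pd2 g m n ξ * w m * u n := by
  conv_lhs => rw [pi_eq_sum_univ' u, pi_eq_sum_univ' w]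
  simp only [Fin.sum_univ_two, map_add, map_smul, add_apply, smul_apply,
    smul_eq_mul, pd2_eq_fderiv_fderiv hg]
  ring

theorem pd2_comp {g : ℝ² → ℝ} {f : ℝ² → ℝ²} {ξ : ℝ²} (hf : ContDiffAt ℝ 2 f ξ)
    (hg : ContDiffAt ℝ 2 g (f ξ)) (i j : Fin 2) :
    pd2 (g ∘ f) i j ξ =
      ∑ m, ∑ n, pd2 g m n (f ξ) * pd (fun η => f η m) i ξ * pd (fun η => f η n) j ξ
        + ∑ m, pd g m (f ξ) * pd2 (fun η => f η m) i j ξ := by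
  rw [pd2_eq_fderiv_fderiv (hg.comp ξ hf).differentiableAt_fderiv, fderiv_fderiv_comp hf hg,
    fderiv_eq_sum_pd, fderiv_fderiv_eq_sum_pd2 hg.differentiableAt_fderiv]
  simp only [← pd_apply_eq (hf.differentiableAt (by norm_num)), ← pd2_apply_eq hf]

theorem det_fderiv_eq {f : ℝ² → ℝ²} {ξ : ℝ²} (hf : DifferentiableAt ℝ f ξ) :
    LinearMap.det (fderiv ℝ f ξ).toLinearMap =
      pd (fun η => f η 0) 0 ξ * pd (fun η => f η 1) 1 ξ
        - pd (fun η => f η 0) 1 ξ * pd (fun η => f η 1) 0 ξ := by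
  rw [← LinearMap.det_toMatrix (Pi.basisFun ℝ (Fin 2)), Matrix.det_fin_two]
  simp only [LinearMap.toMatrix_apply, Pi.basisFun_apply, Pi.basisFun_repr,
    ContinuousLinearMap.coe_coe, pd_apply_eq hf]

theorem Filter.EventuallyEq.pd2_eq {f g : ℝ² → ℝ} {ξ : ℝ²} (h : f =ᶠ[𝓝 ξ] g) (i j : Fin 2) :
    pd2 f i j ξ = pd2 g i j ξ := by
  have hpd : pd f i =ᶠ[𝓝 ξ] pd g i :=
    (h.fderiv (𝕜 := ℝ)).mono fun ζ hζ => by simp only [pd, hζ]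
  show fderiv ℝ (pd f i) ξ (Pi.single j 1) = fderiv ℝ (pd g i) ξ (Pi.single j 1)
  rw [hpd.fderiv_eq]

theorem pd2_eval_eq_zero (k i j : Fin 2) (ξ : ℝ²) : pd2 (fun η : ℝ² => η k) i j ξ = 0 :=
  (pd2_apply_eq (f := id) contDiffAt_id k i j).trans (by
    simp [show fderiv ℝ (id : ℝ² → ℝ²) = fun _ => .id ℝ ℝ² from funext fun _ => fderiv_id])

/-- The unscaled operator `A(x) : H(f)` of the paper (indices `0, 1` stand for `ξ₁, ξ₂`). -/
noncomputable def gridOperator (x : ℝ² → ℝ²) (f : ℝ² → ℝ) (ξ : ℝ²) : ℝ :=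
  gmet x 1 1 ξ * pd2 f 0 0 ξ - 2 * gmet x 0 1 ξ * pd2 f 0 1 ξ + gmet x 0 0 ξ * pd2 f 1 1 ξ

theorem sq_det_mul_laplacian_add_fderiv_gridOperator_eq_zero {x y : ℝ² → ℝ²} {ξ : ℝ²}
    (hx : ContDiffAt ℝ 2 x ξ) (hy : ContDiffAt ℝ 2 y (x ξ)) (hyx : ∀ᶠ ζ in 𝓝 ξ, y (x ζ) = ζ)
    (k : Fin 2) :
    LinearMap.det (fderiv ℝ x ξ).toLinearMap ^ 2
        * (pd2 (fun p => y p k) 0 0 (x ξ) + pd2 (fun p => y p k) 1 1 (x ξ))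
      + fderiv ℝ y (x ξ) (fun m => gridOperator x (fun η => x η m) ξ) k = 0 := by
  have hyk : ContDiffAt ℝ 2 (fun p => y p k) (x ξ) :=
    (contDiff_apply ℝ ℝ k).contDiffAt.comp _ hy
  have hQ : ∀ i j, ∑ m, ∑ n, pd2 (fun p => y p k) m n (x ξ) * pd (fun η => x η m) i ξ
        * pd (fun η => x η n) j ξ
      + ∑ m, pd (fun p => y p k) m (x ξ) * pd2 (fun η => x η m) i j ξ = 0 := fun i j => by
    have hcoord : (fun p => y p k) ∘ x =ᶠ[𝓝 ξ] fun ζ => ζ k := hyx.mono fun ζ h => congrFun h k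
    rw [← pd2_comp hx hyk, hcoord.pd2_eq, pd2_eval_eq_zero]
  have hS : ∀ m, pd2 (fun η => x η m) 0 1 ξ = pd2 (fun η => x η m) 1 0 ξ := fun m =>
    pd2_comm ((contDiff_apply ℝ ℝ m).contDiffAt.comp _ hx) 0 1
  have hDy : ∀ v, fderiv ℝ y (x ξ) v k = ∑ m, pd (fun p => y p k) m (x ξ) * v m := fun v => by
    rw [← fderiv_eq_sum_pd, fderiv_apply (hy.differentiableAt (by norm_num))]; rfl
  rw [det_fderiv_eq (hx.differentiableAt (by norm_num)), hDy]
  have Q00 := hQ 0 0; have Q01 := hQ 0 1; have Q10 := hQ 1 0; have Q11 := hQ 1 1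
  simp only [gridOperator, gmet, Fin.sum_univ_two] at Q00 Q01 Q10 Q11 ⊢
  set a := pd (fun η => x η 0) 0 ξ
  set b := pd (fun η => x η 0) 1 ξ
  set c := pd (fun η => x η 1) 0 ξ
  set d := pd (fun η => x η 1) 1 ξ
  -- coefficients from `adj g`; `hS` reconciles the two mixed derivatives of `xₘ`
  linear_combination (b * b + d * d) * Q00 - (a * b + c * d) * (Q01 + Q10) + (a * a + c * c) * Q11
    - (a * b + c * d) * (pd (fun p => y p k) 0 (x ξ) * hS 0 + pd (fun p => y p k) 1 (x ξ) * hS 1)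

end Plane

theorem stmt3_general (U V : Set (Fin 2 → ℝ)) (hU : IsOpen U)
    (x y : (Fin 2 → ℝ) → (Fin 2 → ℝ))
    (hx : ContDiffOn ℝ 2 x U)
    (hbij : Set.BijOn x U V)
    (hjac : ∀ ξ ∈ U, LinearMap.det (fderiv ℝ x ξ).toLinearMap ≠ 0)
    (hinv : Set.InvOn y x U V) :
    (∀ ξ ∈ U, ∀ i : Fin 2,
        gmet x 1 1 ξ * pd2 (fun η => x η i) 0 0 ξ
          - 2 * gmet x 0 1 ξ * pd2 (fun η => x η i) 0 1 ξ
          + gmet x 0 0 ξ * pd2 (fun η => x η i) 1 1 ξ = 0)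
      ↔ (∀ k : Fin 2, Harmonic2 (fun p => y p k) V) := by
  have hxC : ∀ ξ ∈ U, ContDiffAt ℝ 2 x ξ := fun ξ hξ => hx.contDiffAt (hU.mem_nhds hξ)
  have hyx : ∀ ξ ∈ U, ∀ᶠ ζ in 𝓝 ξ, y (x ζ) = ζ := fun ξ hξ =>
    eventually_of_mem (hU.mem_nhds hξ) fun _ hζ => hinv.1 hζ
  have hy : ∀ ξ ∈ U, ContDiffAt ℝ 2 y (x ξ) ∧ Function.Injective (fderiv ℝ y (x ξ)) :=
    fun ξ hξ => (hxC ξ hξ).local_left_inverse_of_det_ne_zero (by simp) (hjac ξ hξ) (hyx ξ hξ)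
  have key := fun ξ hξ => sq_det_mul_laplacian_add_fderiv_gridOperator_eq_zero (hxC ξ hξ)
    (hy ξ hξ).1 (hyx ξ hξ)
  constructor
  · refine fun hgrid k => ⟨fun p hp => ?_, fun p hp => ?_⟩ <;>
      obtain ⟨ξ, hξ, rfl⟩ := hbij.surjOn hp
    · exact ((contDiff_apply ℝ ℝ k).contDiffAt.comp _ (hy ξ hξ).1).contDiffWithinAt
    · have hk := key ξ hξ k
      rw [show (fun m => gridOperator x (fun η => x η m) ξ) = 0 from funext (hgrid ξ hξ),
        map_zero, Pi.zero_apply, add_zero] at hk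
      exact (mul_eq_zero.1 hk).resolve_left (pow_ne_zero 2 (hjac ξ hξ))
  · intro hharm ξ hξ
    have hL : fderiv ℝ y (x ξ) (fun m => gridOperator x (fun η => x η m) ξ) = 0 :=
      funext fun k => by simpa [(hharm k).2 _ (hbij.mapsTo hξ)] using key ξ hξ k
    exact congrFun ((hy ξ hξ).2 (hL.trans (map_zero _).symm))

/-- The elliptic-grid-generation equations (paper eq. (7)): a bijective `C²`
map `x : U → V` with nowhere-vanishing Jacobian determinant satisfies
`g₂₂ ∂²xᵢ/∂ξ₁² − 2 g₁₂ ∂²xᵢ/∂ξ₁∂ξ₂ + g₁₁ ∂²xᵢ/∂ξ₂² = 0` for both components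
if and only if both components of its inverse are harmonic on `V`. -/
theorem stmt3 (U V : Set (Fin 2 → ℝ)) (hU : IsOpen U) (hV : IsOpen V)
    (x y : (Fin 2 → ℝ) → (Fin 2 → ℝ))
    (hx : ContDiffOn ℝ 2 x U)
    (hbij : Set.BijOn x U V)
    (hjac : ∀ ξ ∈ U, LinearMap.det (fderiv ℝ x ξ).toLinearMap ≠ 0)
    (hinv : Set.InvOn y x U V) :
    (∀ ξ ∈ U, ∀ i : Fin 2,
        gmet x 1 1 ξ * pd2 (fun η => x η i) 0 0 ξ
          - 2 * gmet x 0 1 ξ * pd2 (fun η => x η i) 0 1 ξ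
          + gmet x 0 0 ξ * pd2 (fun η => x η i) 1 1 ξ = 0)
      ↔ (∀ k : Fin 2, Harmonic2 (fun p => y p k) V) :=
  stmt3_general U V hU x y hx hbij hjac hinv
end
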